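/- A finite simple graph G is a comparability graph if and only if there exists a finite family of linear orders on its vertex set such that two distinct vertices a, b are adjacent in G iff a and b are comparable the same way in all the linear orders (i.e., either a < b in every order or b < a in every order). -/

import Mathlib

/-!
A transitive orientation of `G` is a strict partial order whose comparability graph is `G`.
By Szpilrajn's theorem, applied after adjoining `b < a`, every pair `a, b` with `¬ a < b` is
reversed by some linear extension; so a finite strict order is the intersection of finitely many
linear extensions, one per ordered pair. Conversely, the intersection of a nonempty family of
linear orders is a strict order, and two points are comparable in it exactly when all the orders
compare them the same way.
-/

section Defs

variable {V : Type*}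

/-- Two letters alternate in a word: the subword over `{a,b}` has no equal consecutive letters. -/
def Alternates [DecidableEq V] (w : List V) (a b : V) : Prop :=
  (w.filter (fun x => decide (x = a ∨ x = b))).Chain' (· ≠ ·)

/-- A word over the vertex set represents a graph: every vertex occurs, and two distinct
vertices are adjacent iff they alternate in the word. -/
def Represents [DecidableEq V] (w : List V) (G : SimpleGraph V) : Prop :=
  (∀ v : V, v ∈ w) ∧ ∀ a b : V, a ≠ b → (G.Adj a b ↔ Alternates w a b)

def WordRepresentable [DecidableEq V] (G : SimpleGraph V) : Prop :=
  ∃ w : List V, Represents w G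

/-- Every letter occurs exactly `k` times. -/
def IsKUniform [DecidableEq V] (w : List V) (k : ℕ) : Prop :=
  ∀ v : V, w.count v = k

/-- `k` is the representation number of `G`. -/
def RepNumIs [DecidableEq V] (G : SimpleGraph V) (k : ℕ) : Prop :=
  IsLeast {n : ℕ | ∃ w : List V, IsKUniform w n ∧ Represents w G} k

/-- `p` is a permutation of the vertex set (as a list). -/
def IsPermOn (p : List V) : Prop := p.Nodup ∧ ∀ v : V, v ∈ p

/-- `G` is representable by a concatenation of `k` permutations of its vertex set. -/
def PermRepresents [DecidableEq V] (G : SimpleGraph V) (k : ℕ) : Prop :=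
  ∃ ps : List (List V), ps.length = k ∧ (∀ p ∈ ps, IsPermOn p) ∧ Represents ps.flatten G

/-- `k` is the permutation-representation number of `G`. -/
def PrnIs [DecidableEq V] (G : SimpleGraph V) (k : ℕ) : Prop :=
  IsLeast {n : ℕ | PermRepresents G n} k

/-- A comparability graph: a graph admitting a transitive orientation of its edges. -/
def IsComparability (G : SimpleGraph V) : Prop :=
  ∃ lt : V → V → Prop, Transitive lt ∧ (∀ a b, lt a b → G.Adj a b) ∧
    (∀ a b, G.Adj a b → (lt a b ↔ ¬ lt b a))

/-- A module: every outside vertex is adjacent to all of `M` or to none of `M`. -/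
def IsModule (G : SimpleGraph V) (M : Set V) : Prop :=
  ∀ x ∉ M, (∀ m ∈ M, G.Adj x m) ∨ (∀ m ∈ M, ¬ G.Adj x m)

end Defs

/-- The graph obtained from `G` by replacing the vertex `a` with the module `M`. -/
def substGraph {W V' : Type*} (G : SimpleGraph W) (a : W) (M : SimpleGraph V') :
    SimpleGraph ({x : W // x ≠ a} ⊕ V') where
  Adj x y :=
    match x, y with
    | Sum.inl u, Sum.inl v => G.Adj u.1 v.1
    | Sum.inl u, Sum.inr _ => G.Adj u.1 a
    | Sum.inr _, Sum.inl v => G.Adj a v.1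
    | Sum.inr u, Sum.inr v => M.Adj u v
  symm := by
    constructor
    rintro (u | u) (v | v) h
    · exact h.symm
    · exact h.symm
    · exact h.symm
    · exact h.symm
  loopless := by
    constructor
    rintro (u | u) h
    · exact G.irrefl h
    · exact M.irrefl h

/-- The quotient graph of a modular partition: parts are adjacent iff completely adjacent. -/
def quotientGraph {V : Type*} (G : SimpleGraph V) {n : ℕ} (Mod : Fin n → Set V) :
    SimpleGraph (Fin n) where
  Adj i j := i ≠ j ∧ ∀ a ∈ Mod i, ∀ b ∈ Mod j, G.Adj a b
  symm := by
    constructor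
    rintro i j ⟨hij, h⟩
    exact ⟨hij.symm, fun a ha b hb => (h b hb a ha).symm⟩
  loopless := by constructor; rintro i ⟨h, _⟩; exact h rfl

/-- The lexicographical product of two graphs. -/
def lexProd {V V' : Type*} (G : SimpleGraph V) (G' : SimpleGraph V') :
    SimpleGraph (V × V') where
  Adj x y := G.Adj x.1 y.1 ∨ (x.1 = y.1 ∧ G'.Adj x.2 y.2)
  symm := by
    constructor
    rintro ⟨a, a'⟩ ⟨b, b'⟩ (h | ⟨h1, h2⟩)
    · exact Or.inl h.symm
    · exact Or.inr ⟨h1.symm, h2.symm⟩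
  loopless := by
    constructor
    rintro ⟨a, a'⟩ (h | ⟨_, h⟩)
    · exact G.irrefl h
    · exact G'.irrefl h

section LinearExtension

variable {α : Type*} (r : α → α → Prop) [IsStrictOrder α r]

theorem exists_linearOrder_extending : ∃ L : LinearOrder α, ∀ x y, r x y → L.lt x y := by
  let := partialOrderOfSO r
  have hmono : StrictMono (toLinearExtension : α →o LinearExtension α) :=
    toLinearExtension.monotone.strictMono_of_injective fun _ _ => id
  exact ⟨(inferInstance : LinearOrder (LinearExtension α)), fun _ _ => @hmono _ _⟩

theorem exists_linearOrder_extending_le_of_not_lt {a b : α} (hab : ¬ r a b) :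
    ∃ L : LinearOrder α, (∀ x y, r x y → L.lt x y) ∧ L.le b a := by
  rcases eq_or_ne a b with rfl | hne
  · obtain ⟨L, hL⟩ := exists_linearOrder_extending r
    exact ⟨L, hL, L.le_refl a⟩
  let := partialOrderOfSO r
  -- Adjoin `b < a` to `r` and close under transitivity.
  let s x y := x < y ∨ (x ≤ b ∧ a ≤ y)
  have : IsStrictOrder α s :=
    { irrefl := by
        rintro x (hxx | ⟨hxb, hax⟩)
        · exact lt_irrefl x hxx
        · exact hab ((hax.trans hxb).lt_of_ne hne)
      trans := by
        rintro x y z (hxy | ⟨hxb, hay⟩) (hyz | ⟨hyb, haz⟩)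
        · exact Or.inl (hxy.trans hyz)
        · exact Or.inr ⟨hxy.le.trans hyb, haz⟩
        · exact Or.inr ⟨hxb, hay.trans hyz.le⟩
        · exact Or.inr ⟨hxb, haz⟩ }
  obtain ⟨L, hL⟩ := exists_linearOrder_extending s
  have hba : L.lt b a := hL b a (Or.inr ⟨le_rfl, le_rfl⟩)
  exact ⟨L, fun x y hxy => hL x y (Or.inl hxy), ((L.lt_iff_le_not_ge b a).1 hba).1⟩

theorem exists_fin_linearOrder_realizer [Finite α] :
    ∃ (n : ℕ) (L : Fin n → LinearOrder α), 0 < n ∧ ∀ a b, r a b ↔ ∀ i, (L i).lt a b := by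
  obtain ⟨m, ⟨e⟩⟩ := Finite.exists_equiv_fin (α × α)
  obtain ⟨L₀, hL₀⟩ := exists_linearOrder_extending r
  have hpair (p : α × α) :
      ∃ L : LinearOrder α, (∀ x y, r x y → L.lt x y) ∧ (¬ r p.1 p.2 → L.le p.2 p.1) := by
    by_cases hp : r p.1 p.2
    · exact ⟨L₀, hL₀, absurd hp⟩
    · obtain ⟨L, hL, hle⟩ := exists_linearOrder_extending_le_of_not_lt r hp
      exact ⟨L, hL, fun _ => hle⟩
  choose Lp hLp hLp_le using hpair
  -- `L₀` keeps the family nonempty when `α` is empty.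
  refine ⟨m + 1, Fin.cons L₀ (Lp ∘ e.symm), m.succ_pos, fun a b => ⟨fun hab i => ?_, fun h => ?_⟩⟩
  · cases i using Fin.cases with
    | zero => exact hL₀ a b hab
    | succ i => exact hLp _ a b hab
  · by_contra hab
    have hlt := h (e (a, b)).succ
    rw [Fin.cons_succ, Function.comp_apply, Equiv.symm_apply_apply] at hlt
    exact (Lp (a, b)).lt_iff_le_not_ge a b |>.1 hlt |>.2 (hLp_le (a, b) hab)

end LinearExtension

theorem isStrictOrder_forall_lt {α ι : Type*} [Nonempty ι] (L : ι → LinearOrder α) :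
    IsStrictOrder α (fun a b => ∀ i, (L i).lt a b) where
  irrefl a h := @lt_irrefl α (L (Classical.arbitrary ι)).toPreorder a (h _)
  trans _ _ _ hab hbc i := @lt_trans α (L i).toPreorder _ _ _ (hab i) (hbc i)

theorem isComparability_iff_exists_isStrictOrder {V : Type*} (G : SimpleGraph V) :
    IsComparability G ↔
      ∃ r : V → V → Prop, IsStrictOrder V r ∧ ∀ a b, a ≠ b → (G.Adj a b ↔ r a b ∨ r b a) := by
  constructor
  · rintro ⟨lt, htrans, hadj, horient⟩
    have : IsStrictOrder V lt :=
      { irrefl a h := G.irrefl (hadj a a h)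
        trans _ _ _ := @htrans _ _ _ }
    refine ⟨lt, this, fun a b _ => ⟨fun h => ?_, ?_⟩⟩
    · exact (em (lt a b)).imp_right fun hab => not_not.1 (mt (horient a b h).2 hab)
    · rintro (h | h)
      exacts [hadj a b h, (hadj b a h).symm]
  · rintro ⟨r, hr, hadj⟩
    refine ⟨r, fun _ _ _ => _root_.trans, fun a b h => (hadj a b (ne_of_irrefl h)).2 (Or.inl h),
      fun a b h => ⟨asymm, fun hba => ((hadj a b (G.ne_of_adj h)).1 h).resolve_right hba⟩⟩

theorem stmt4_general {V : Type*} [Fintype V] (G : SimpleGraph V) :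
    IsComparability G ↔
      ∃ (n : ℕ) (L : Fin n → LinearOrder V), 1 ≤ n ∧
        ∀ a b : V, a ≠ b →
          (G.Adj a b ↔ ((∀ i, (L i).lt a b) ∨ (∀ i, (L i).lt b a))) := by
  rw [isComparability_iff_exists_isStrictOrder]
  constructor
  · rintro ⟨r, hr, hadj⟩
    obtain ⟨n, L, hn, hL⟩ := exists_fin_linearOrder_realizer r
    exact ⟨n, L, hn, fun a b hab => by rw [hadj a b hab, hL, hL]⟩
  · rintro ⟨n, L, hn, hadj⟩
    have : Nonempty (Fin n) := ⟨⟨0, hn⟩⟩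
    exact ⟨_, isStrictOrder_forall_lt L, hadj⟩

/-- `G` is a comparability graph iff there is a nonempty finite family of linear
orders on `V` such that two distinct vertices are adjacent iff they compare the same way in
all the orders. -/
theorem stmt4 {V : Type*} [DecidableEq V] [Fintype V] (G : SimpleGraph V) :
    IsComparability G ↔
      ∃ (n : ℕ) (L : Fin n → LinearOrder V), 1 ≤ n ∧
        ∀ a b : V, a ≠ b →
          (G.Adj a b ↔ ((∀ i, (L i).lt a b) ∨ (∀ i, (L i).lt b a))) :=
  stmt4_general G
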